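/- For all t ∈ ℝ, u⃗ = (u₁,…,u_m) ∈ ℝ^m and s₁ < s₂ < … < s_m, the function 𝓗₂(t; u⃗, s⃗) := 1 + Σ_{ℓ=1}^m ((e^{−u_ℓ} − 1)/2) · exp(−Σ_{j=1}^{ℓ−1} u_j) · erfc(t + s_ℓ) is strictly positive. -/
import Mathlib


open MeasureTheory Real Filter Finset

noncomputable def erfc (t : ℝ) : ℝ :=
  (2 / Real.sqrt Real.pi) * ∫ x in Set.Ioi t, Real.exp (-x ^ 2)

noncomputable def H2 (m : ℕ) (u s : Fin m → ℝ) (t : ℝ) : ℝ :=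
  1 + ∑ l : Fin m, ((Real.exp (-u l) - 1) / 2) *
      Real.exp (-∑ j ∈ Finset.univ.filter (fun j => j < l), u j) * erfc (t + s l)

lemma gauss_integrable : Integrable (fun x : ℝ => Real.exp (-x ^ 2)) := by
  have := integrable_exp_neg_mul_sq (b := 1) one_pos
  simpa using this

lemma gauss_setIntegral_pos {s : Set ℝ} (hs : MeasurableSet s) (hpos : 0 < volume s) :
    0 < ∫ x in s, Real.exp (-x ^ 2) := by
  rw [setIntegral_pos_iff_support_of_nonneg_ae]
  · have : Function.support (fun x : ℝ => Real.exp (-x ^ 2)) = Set.univ := by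
      ext x; simp [Function.support, (Real.exp_pos _).ne']
    rw [this]; simpa using hpos
  · exact Filter.Eventually.of_forall fun x => (Real.exp_pos _).le
  · exact gauss_integrable.integrableOn

lemma erfc_pos (t : ℝ) : 0 < erfc t := by
  apply mul_pos
  · positivity
  · exact gauss_setIntegral_pos measurableSet_Ioi (by simp)

lemma erfc_lt_two (t : ℝ) : erfc t < 2 := by
  have htot : ∫ x : ℝ, Real.exp (-x ^ 2) = Real.sqrt Real.pi := by
    have := integral_gaussian (1 : ℝ)
    simpa using this
  have hsplit : (∫ x in Set.Iic t, Real.exp (-x ^ 2)) + ∫ x in Set.Ioi t, Real.exp (-x ^ 2)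
      = Real.sqrt Real.pi := by
    rw [← htot]
    exact intervalIntegral.integral_Iic_add_Ioi gauss_integrable.integrableOn
      gauss_integrable.integrableOn
  have h1 : 0 < ∫ x in Set.Iic t, Real.exp (-x ^ 2) :=
    gauss_setIntegral_pos measurableSet_Iic (by simp)
  have h2 : (∫ x in Set.Ioi t, Real.exp (-x ^ 2)) < Real.sqrt Real.pi := by linarith
  have hπ : 0 < Real.sqrt Real.pi := Real.sqrt_pos.mpr Real.pi_pos
  calc erfc t < (2 / Real.sqrt Real.pi) * Real.sqrt Real.pi :=
        mul_lt_mul_of_pos_left h2 (by positivity)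
    _ = 2 := by field_simp

lemma erfc_anti {a b : ℝ} (h : a ≤ b) : erfc b ≤ erfc a := by
  unfold erfc
  apply mul_le_mul_of_nonneg_left _ (by positivity)
  apply setIntegral_mono_set gauss_integrable.integrableOn
  · exact Filter.Eventually.of_forall fun x => (Real.exp_pos _).le
  · exact Filter.Eventually.of_forall (Set.Ioi_subset_Ioi h)

lemma key_lb (E c : ℕ → ℝ) (hE0 : E 0 = 1) (hEpos : ∀ i, 0 < E i)
    (hc : ∀ i j, i ≤ j → c j ≤ c i) :
    ∀ n, 0 < n →
      1 - c 0 / 2 + E n * c (n - 1) / 2 ≤ 1 + ∑ i ∈ Finset.range n, (E (i+1) - E i) * c i / 2 := by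
  intro n hn
  induction n with
  | zero => omega
  | succ k ih =>
    rcases Nat.eq_zero_or_pos k with hk | hk
    · subst hk
      have h : (E 1 - E 0) * c 0 / 2 = E 1 * c 0 / 2 - c 0 / 2 := by rw [hE0]; ring
      rw [Finset.sum_range_one, h]
      ring_nf
      exact le_rfl
    · rw [Finset.sum_range_succ]
      have h1 := ih hk
      have h2 : c k ≤ c (k - 1) := hc _ _ (by omega)
      have h4 : E k * c k ≤ E k * c (k - 1) := mul_le_mul_of_nonneg_left h2 (hEpos k).le
      have h5 : (k + 1 : ℕ) - 1 = k := rfl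
      rw [show (k + 1 : ℕ) - 1 = k from rfl] at *
      nlinarith [hEpos k, hEpos (k+1)]

theorem H2_pos (m : ℕ) (hm : 0 < m) (t : ℝ) (u s : Fin m → ℝ) (hs : StrictMono s) :
    0 < H2 m u s t := by
  classical
  let u' : ℕ → ℝ := fun i => if h : i < m then u ⟨i, h⟩ else 0
  let E : ℕ → ℝ := fun k => Real.exp (-∑ j ∈ Finset.range (min k m), u' j)
  let c : ℕ → ℝ := fun i => erfc (t + s ⟨min i (m - 1), by omega⟩)
  have hE0 : E 0 = 1 := by simp [E]
  have hEpos : ∀ i, 0 < E i := fun i => Real.exp_pos _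
  have hcmono : ∀ i j, i ≤ j → c j ≤ c i := by
    intro i j hij
    apply erfc_anti
    have : s ⟨min j (m - 1), by omega⟩ ≤ s ⟨min i (m - 1), by omega⟩ ∨
        s ⟨min i (m - 1), by omega⟩ ≤ s ⟨min j (m - 1), by omega⟩ := le_total _ _
    have hle : s ⟨min i (m - 1), by omega⟩ ≤ s ⟨min j (m - 1), by omega⟩ := by
      apply hs.monotone
      show min i (m - 1) ≤ min j (m - 1)
      omega
    linarith
  have hcpos : ∀ i, 0 < c i := fun i => erfc_pos _
  have hc0 : c 0 < 2 := erfc_lt_two _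
  have hsum : H2 m u s t = 1 + ∑ i ∈ Finset.range m, (E (i+1) - E i) * c i / 2 := by
    unfold H2
    congr 1
    rw [← Fin.sum_univ_eq_sum_range (fun i => (E (i+1) - E i) * c i / 2) m]
    apply Finset.sum_congr rfl
    intro l _
    have hlm : l.val < m := l.isLt
    have hfil : ∑ j ∈ Finset.univ.filter (fun j => j < l), u j
        = ∑ i ∈ Finset.range l.val, u' i := by
      calc ∑ j ∈ Finset.univ.filter (fun j => j < l), u j
          = ∑ j : Fin m, if j < l then u j else 0 := Finset.sum_filter _ _
        _ = ∑ j : Fin m, (fun i : ℕ => if i < l.val then u' i else 0) j.val := by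
            apply Finset.sum_congr rfl
            intro j _
            simp only [Fin.lt_def]
            by_cases hj : j.val < l.val
            · rw [if_pos hj, if_pos hj]
              simp [u', j.isLt]
            · rw [if_neg hj, if_neg hj]
        _ = ∑ i ∈ Finset.range m, (if i < l.val then u' i else 0) :=
            Fin.sum_univ_eq_sum_range (fun i : ℕ => if i < l.val then u' i else 0) m
        _ = ∑ i ∈ (Finset.range m).filter (fun i => i < l.val), u' i :=
            (Finset.sum_filter _ _).symm
        _ = ∑ i ∈ Finset.range l.val, u' i := by
            congr 1
            ext x
            simp only [Finset.mem_filter, Finset.mem_range]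
            omega
    have hEl : E l.val = Real.exp (-∑ j ∈ Finset.univ.filter (fun j => j < l), u j) := by
      rw [hfil]
      show Real.exp (-∑ j ∈ Finset.range (min l.val m), u' j) = _
      rw [min_eq_left hlm.le]
    have hEl1 : E (l.val + 1) = Real.exp (-u l) * E l.val := by
      show Real.exp (-∑ j ∈ Finset.range (min (l.val + 1) m), u' j)
        = Real.exp (-u l) * Real.exp (-∑ j ∈ Finset.range (min l.val m), u' j)
      rw [min_eq_left (by omega), min_eq_left hlm.le, Finset.sum_range_succ, neg_add,
        Real.exp_add, show u' l.val = u l from by simp [u', hlm], mul_comm]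
    have hcl : c l.val = erfc (t + s l) := by
      show erfc (t + s ⟨min l.val (m - 1), by omega⟩) = erfc (t + s l)
      have : (⟨min l.val (m - 1), by omega⟩ : Fin m) = l := by
        apply Fin.ext
        show min l.val (m - 1) = l.val
        omega
      rw [this]
    show ((Real.exp (-u l) - 1) / 2) *
        Real.exp (-∑ j ∈ Finset.univ.filter (fun j => j < l), u j) * erfc (t + s l)
      = (E (l.val + 1) - E l.val) * c l.val / 2
    rw [← hEl, hcl, hEl1]
    ring
  rw [hsum]
  have hkey := key_lb E c hE0 hEpos hcmono m hm
  have hprod : 0 < E m * c (m - 1) := mul_pos (hEpos m) (hcpos (m - 1))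
  linarith
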